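/- Let R be a commutative ring and F a flat R-module. Then F is cotorsion (equivalently: for every pure embedding f : A → B with A and B flat R-modules and every R-homomorphism g : A → F there is an R-homomorphism h : B → F with h ∘ f = g) if and only if for every pure embedding f : A → B with A and B flat R-modules of cardinality at most κ and every R-homomorphism g : A → F, there is an R-homomorphism h : B → F such that h ∘ f = g. -/

import Mathlib

universe u

/-- `A` is a pure submodule of its ambient module: every finite system of
`R`-linear equations `∑ j, r i j • x j = a i` with constants `a i ∈ A` that has
a solution in the ambient module has a solution in `A`. -/
def IsPureSubmodule {R : Type*} [Ring R] {M : Type*} [AddCommGroup M] [Module R M]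
    (A : Submodule R M) : Prop :=
  ∀ (m n : ℕ) (r : Fin m → Fin n → R) (a : Fin m → M),
    (∀ i, a i ∈ A) →
    (∃ x : Fin n → M, ∀ i, (∑ j, r i j • x j) = a i) →
    ∃ x : Fin n → M, (∀ j, x j ∈ A) ∧ ∀ i, (∑ j, r i j • x j) = a i

/-- A pure embedding is an injective linear map whose image is a pure submodule
of its codomain. -/
def IsPureEmbedding {R : Type*} [Ring R] {M N : Type*} [AddCommGroup M] [Module R M]
    [AddCommGroup N] [Module R N] (f : M →ₗ[R] N) : Prop :=
  Function.Injective f ∧ IsPureSubmodule (LinearMap.range f)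

/-- `F` is injective relative to pure embeddings between flat modules; for flat
`F` this says exactly that `F` is cotorsion. -/
def FlatCotorsion (R : Type u) [CommRing R] (F : Type u) [AddCommGroup F] [Module R F] : Prop :=
  ∀ (A B : Type u) [AddCommGroup A] [Module R A] [AddCommGroup B] [Module R B],
    Module.Flat R A → Module.Flat R B →
    ∀ f : A →ₗ[R] B, IsPureEmbedding f →
    ∀ g : A →ₗ[R] F, ∃ h : B →ₗ[R] F, h.comp f = g

/-!
Given a pure embedding `A → B` of flat modules and `g : A → F`, Zorn's lemma yields a maximal
extension of `g` to a pure submodule `C` of `B`. If some `b ∉ C`, close `{b}` countably often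
under chosen solutions of finite linear systems (solutions in `B`, in `C`, and modulo `C`):
this Löwenheim–Skolem argument gives `D ∋ b` of cardinality at most `κ` with `D`, `C ⊓ D` and
`C ⊔ D` pure in `B`. Pure submodules of the flat module `B` are flat, so the hypothesis extends
`g` from `C ⊓ D` along the pure embedding `C ⊓ D → D`; glued with the map on `C`, this extends
`g` to the pure submodule `C ⊔ D`, contradicting maximality.
-/

open Cardinal Submodule

namespace Cardinal

theorem mk_fin_arrow_le {X : Type u} {κ : Cardinal.{u}} (hκ : ℵ₀ ≤ κ) (hX : #X ≤ κ) (m : ℕ) :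
    #(Fin m → X) ≤ κ :=
  (mk_le_of_injective List.ofFn_injective).trans ((mk_list_le_max X).trans (max_le hκ hX))

theorem mk_iUnion_le_of_le {α ι : Type u} {f : ι → Set α} {κ : Cardinal.{u}} (hκ : ℵ₀ ≤ κ)
    (hι : #ι ≤ κ) (hf : ∀ i, #(f i) ≤ κ) : #(⋃ i, f i) ≤ κ :=
  calc #(⋃ i, f i) ≤ #ι * ⨆ i, #(f i) := mk_iUnion_le f
    _ ≤ κ * κ := mul_le_mul' hι (ciSup_le' hf)
    _ = κ := mul_eq_self hκ

theorem mk_iUnion_le_of_countable {α : Type u} {ι : Type v} [Countable ι] {f : ι → Set α}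
    {κ : Cardinal.{u}} (hκ : ℵ₀ ≤ κ) (hf : ∀ i, #(f i) ≤ κ) : #(⋃ i, f i) ≤ κ := by
  rw [← lift_le.{v}]
  calc lift.{v} #(⋃ i, f i) ≤ lift.{u} #ι * ⨆ i, lift.{v} #(f i) := mk_iUnion_le_lift f
    _ ≤ lift.{v} κ * lift.{v} κ :=
      mul_le_mul' ((lift_le_aleph0.2 mk_le_aleph0).trans (aleph0_le_lift.2 hκ))
        (ciSup_le' fun i => lift_le.2 (hf i))
    _ = lift.{v} κ := mul_eq_self (by simpa using hκ)

theorem mk_span_le {R B : Type u} [Semiring R] [AddCommMonoid B] [Module R B] {κ : Cardinal.{u}}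
    (hκ : ℵ₀ ≤ κ) (hR : #R ≤ κ) {s : Set B} (hs : #s ≤ κ) : #(span R s) ≤ κ := by
  have hspan : (span R s : Set B) ⊆
      ⋃ (n : ℕ) (c : Fin n → R), Set.range fun v : Fin n → s => ∑ i, c i • (v i : B) := by
    intro x hx
    obtain ⟨n, c, v, rfl⟩ := mem_span_set'.1 hx
    exact Set.mem_iUnion₂.2 ⟨n, c, v, rfl⟩
  rw [← SetLike.coe_sort_coe]
  exact (mk_le_mk_of_subset hspan).trans <| mk_iUnion_le_of_countable hκ fun n =>
    mk_iUnion_le_of_le hκ (mk_fin_arrow_le hκ hR n) fun _ =>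
    mk_range_le.trans (mk_fin_arrow_le hκ hs n)

end Cardinal

namespace Submodule

variable {R : Type*} [Ring R] {B : Type*} [AddCommGroup B] [Module R B]

theorem exists_mem_forall_mem_of_directedOn {s : Set (Submodule R B)} (hne : s.Nonempty)
    (hs : DirectedOn (· ≤ ·) s) {ι : Type*} [Finite ι] {a : ι → B} (ha : ∀ i, a i ∈ sSup s) :
    ∃ p ∈ s, ∀ i, a i ∈ p := by
  obtain ⟨p, hp, hle⟩ := (CompleteLattice.isCompactElement_iff_le_of_directed_sSup_le _ _).1
    (finite_span_isCompactElement (R := R) _ (Set.finite_range a)) s hne hs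
    (span_le.2 (Set.range_subset_iff.2 ha))
  exact ⟨p, hp, fun i => hle (subset_span (Set.mem_range_self i))⟩

end Submodule

section Pure

variable {R : Type*} [Ring R] {B : Type*} [AddCommGroup B] [Module R B]

theorem isPureSubmodule_sSup {s : Set (Submodule R B)} (hne : s.Nonempty)
    (hs : DirectedOn (· ≤ ·) s) (h : ∀ p ∈ s, IsPureSubmodule p) : IsPureSubmodule (sSup s) := by
  intro m n r a ha hsol
  obtain ⟨p, hp, hap⟩ := exists_mem_forall_mem_of_directedOn hne hs ha
  obtain ⟨x, hx, hxa⟩ := h p hp m n r a hap hsol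
  exact ⟨x, fun j => le_sSup hp (hx j), hxa⟩

theorem IsPureSubmodule.isPureEmbedding_inclusion {P Q : Submodule R B} (hP : IsPureSubmodule P)
    (hPQ : P ≤ Q) : IsPureEmbedding (inclusion hPQ) := by
  refine ⟨inclusion_injective hPQ, fun m n r a ha ⟨x, hx⟩ => ?_⟩
  have haP : ∀ i, (a i : B) ∈ P := fun i => by
    obtain ⟨y, hy⟩ := ha i
    exact hy ▸ y.2
  obtain ⟨y, hyP, hy⟩ := hP m n r (fun i => a i) haP
    ⟨fun j => x j, fun i => by simpa using congrArg Subtype.val (hx i)⟩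
  refine ⟨fun j => ⟨y j, hPQ (hyP j)⟩, fun j => ⟨⟨y j, hyP j⟩, rfl⟩, fun i => Subtype.ext ?_⟩
  simpa using hy i

end Pure

theorem IsPureSubmodule.flat {R : Type*} [CommRing R] {B : Type*} [AddCommGroup B] [Module R B]
    [Module.Flat R B] {A : Submodule R B} (hA : IsPureSubmodule A) : Module.Flat R A := by
  refine Module.Flat.of_forall_isTrivialRelation fun {l f x} hfx => ?_
  obtain ⟨k, a, y, hxy, hfa⟩ := Module.Flat.isTrivialRelation_of_sum_smul_eq_zero
    (f := f) (x := fun i => (x i : B)) (by simpa using congrArg Subtype.val hfx)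
  obtain ⟨y', hy'A, hy'⟩ := hA l k a (fun i => x i) (fun i => (x i).2) ⟨y, fun i => (hxy i).symm⟩
  exact ⟨k, a, fun j => ⟨y' j, hy'A j⟩, fun i => Subtype.ext (by simpa using (hy' i).symm), hfa⟩

section SolutionClosed

variable {R : Type*} [Ring R] {B : Type*} [AddCommGroup B] [Module R B]

def SolvesModIn (P Q : Submodule R B) {m n : ℕ} (r : Fin m → Fin n → R) (a : Fin m → B)
    (x : Fin n → B) : Prop :=
  (∀ j, x j ∈ P) ∧ ∀ i, ∑ j, r i j • x j - a i ∈ Q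

theorem solvesModIn_bot_iff {P : Submodule R B} {m n : ℕ} {r : Fin m → Fin n → R}
    {a : Fin m → B} {x : Fin n → B} :
    SolvesModIn P ⊥ r a x ↔ (∀ j, x j ∈ P) ∧ ∀ i, ∑ j, r i j • x j = a i := by
  simp only [SolvesModIn, mem_bot, sub_eq_zero]

def SolutionClosed (P Q D : Submodule R B) : Prop :=
  ∀ (m n : ℕ) (r : Fin m → Fin n → R) (a : Fin m → B), (∀ i, a i ∈ D) →
    (∃ x, SolvesModIn P Q r a x) → ∃ x, SolvesModIn P Q r a x ∧ ∀ j, x j ∈ D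

variable {C D : Submodule R B}

theorem SolutionClosed.isPureSubmodule (hD : SolutionClosed ⊤ ⊥ D) : IsPureSubmodule D := by
  intro m n r a ha ⟨x, hx⟩
  obtain ⟨y, hy, hyD⟩ := hD m n r a ha ⟨x, solvesModIn_bot_iff.2 ⟨fun _ => mem_top, hx⟩⟩
  exact ⟨y, hyD, (solvesModIn_bot_iff.1 hy).2⟩

theorem SolutionClosed.isPureSubmodule_inf (hC : IsPureSubmodule C) (hD : SolutionClosed C ⊥ D) :
    IsPureSubmodule (C ⊓ D) := by
  intro m n r a ha hsol
  obtain ⟨x, hxC, hx⟩ := hC m n r a (fun i => (ha i).1) hsol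
  obtain ⟨y, hy, hyD⟩ := hD m n r a (fun i => (ha i).2) ⟨x, solvesModIn_bot_iff.2 ⟨hxC, hx⟩⟩
  rw [solvesModIn_bot_iff] at hy
  exact ⟨y, fun j => ⟨hy.1 j, hyD j⟩, hy.2⟩

/-- With `e = c + d`, a solution `x` of `r x = e` solves `r x ≡ d (mod C)`; if `y ∈ D` does too,
purity of `C` solves `r z = c - (r y - d)` inside `C`, and `z + y ∈ C ⊔ D` solves `r x = e`. -/
theorem SolutionClosed.isPureSubmodule_sup (hC : IsPureSubmodule C) (hD : SolutionClosed ⊤ C D) :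
    IsPureSubmodule (C ⊔ D) := by
  intro m n r e he ⟨x, hx⟩
  choose c hc d hd hcd using fun i => mem_sup.1 (he i)
  obtain ⟨y, ⟨-, hyC⟩, hyD⟩ := hD m n r d hd
    ⟨x, fun _ => mem_top, fun i => by rw [hx i, ← hcd i, add_sub_cancel_right]; exact hc i⟩
  obtain ⟨z, hzC, hz⟩ := hC m n r (fun i => c i - (∑ j, r i j • y j - d i))
    (fun i => sub_mem (hc i) (hyC i)) ⟨x - y, fun i => by
      simp only [Pi.sub_apply, smul_sub, Finset.sum_sub_distrib, hx i, ← hcd i]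
      abel⟩
  refine ⟨z + y, fun j => add_mem (mem_sup_left (hzC j)) (mem_sup_right (hyD j)), fun i => ?_⟩
  simp only [Pi.add_apply, smul_add, Finset.sum_add_distrib, hz i, ← hcd i]
  abel

end SolutionClosed

section SolutionHull

variable {R : Type u} [Ring R] {B : Type u} [AddCommGroup B] [Module R B]
  (S : Set (Submodule R B × Submodule R B))

/-- `Classical.epsilon` picks a solution whenever the system is solvable in `P` modulo `Q`. -/
noncomputable def chosenSolutions (T : Set B) : Set B :=
  ⋃ (PQ : S) (m : ℕ) (n : ℕ) (r : Fin m → Fin n → R) (a : Fin m → T),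
    Set.range (Classical.epsilon (SolvesModIn PQ.1.1 PQ.1.2 r fun i => (a i : B)))

noncomputable def solutionHullSeq (s : Set B) : ℕ → Submodule R B
  | 0 => span R s
  | k + 1 => span R (solutionHullSeq s k ∪ chosenSolutions S (solutionHullSeq s k))

noncomputable def solutionHull (s : Set B) : Submodule R B :=
  ⨆ k, solutionHullSeq S s k

theorem epsilon_mem_chosenSolutions {P Q : Submodule R B} (hPQ : (P, Q) ∈ S) {T : Set B}
    {m n : ℕ} (r : Fin m → Fin n → R) {a : Fin m → B} (ha : ∀ i, a i ∈ T) (j : Fin n) :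
    Classical.epsilon (SolvesModIn P Q r a) j ∈ chosenSolutions S T := by
  simp only [chosenSolutions, Set.mem_iUnion, Set.mem_range]
  exact ⟨⟨_, hPQ⟩, m, n, r, fun i => ⟨a i, ha i⟩, j, rfl⟩

theorem solutionHullSeq_monotone (s : Set B) : Monotone (solutionHullSeq S s) :=
  monotone_nat_of_le_succ fun _ _ hx => subset_span (Or.inl hx)

theorem subset_solutionHull (s : Set B) : s ⊆ solutionHull S s :=
  fun _ hx => le_iSup (solutionHullSeq S s) 0 (subset_span hx)

theorem solutionClosed_solutionHull {P Q : Submodule R B} (hPQ : (P, Q) ∈ S) (s : Set B) :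
    SolutionClosed P Q (solutionHull S s) := by
  intro m n r a ha hsol
  obtain ⟨_, ⟨k, rfl⟩, hk⟩ := exists_mem_forall_mem_of_directedOn (Set.range_nonempty _)
    (directedOn_range.2 (solutionHullSeq_monotone S s).directed_le) ha
  exact ⟨_, Classical.epsilon_spec hsol, fun j => le_iSup (solutionHullSeq S s) (k + 1)
    (subset_span (Or.inr (epsilon_mem_chosenSolutions S hPQ r hk j)))⟩

theorem mk_chosenSolutions_le {κ : Cardinal.{u}} (hκ : ℵ₀ ≤ κ) (hR : #R ≤ κ) (hS : #S ≤ κ)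
    {T : Set B} (hT : #T ≤ κ) : #(chosenSolutions S T) ≤ κ :=
  mk_iUnion_le_of_le hκ hS fun _ =>
    mk_iUnion_le_of_countable hκ fun m =>
    mk_iUnion_le_of_countable hκ fun n =>
    mk_iUnion_le_of_le hκ (mk_fin_arrow_le hκ (mk_fin_arrow_le hκ hR n) m) fun _ =>
    mk_iUnion_le_of_le hκ (mk_fin_arrow_le hκ hT m) fun _ =>
    mk_le_aleph0.trans hκ

theorem mk_solutionHull_le {κ : Cardinal.{u}} (hκ : ℵ₀ ≤ κ) (hR : #R ≤ κ) (hS : #S ≤ κ)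
    {s : Set B} (hs : #s ≤ κ) : #(solutionHull S s) ≤ κ := by
  have hseq : ∀ k, #(solutionHullSeq S s k) ≤ κ := by
    intro k
    induction k with
    | zero => exact mk_span_le hκ hR hs
    | succ k ih =>
      exact mk_span_le hκ hR ((mk_union_le _ _).trans
        (add_le_of_le hκ ih (mk_chosenSolutions_le S hκ hR hS ih)))
  rw [← SetLike.coe_sort_coe, solutionHull,
    coe_iSup_of_directed _ (solutionHullSeq_monotone S s).directed_le]
  exact mk_iUnion_le_of_countable hκ hseq

end SolutionHull

theorem exists_pure_cover {R : Type u} [Ring R] {B : Type u} [AddCommGroup B] [Module R B]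
    {κ : Cardinal.{u}} (hκ : ℵ₀ ≤ κ) (hR : #R ≤ κ) {C : Submodule R B} (hC : IsPureSubmodule C)
    (b : B) : ∃ D : Submodule R B, b ∈ D ∧ #D ≤ κ ∧ IsPureSubmodule D ∧
      IsPureSubmodule (C ⊓ D) ∧ IsPureSubmodule (C ⊔ D) := by
  let S : Set (Submodule R B × Submodule R B) := {(⊤, ⊥), (C, ⊥), (⊤, C)}
  have hS : #S ≤ κ := mk_le_aleph0.trans hκ
  have hb : #({b} : Set B) ≤ κ := (mk_singleton b).le.trans (one_le_aleph0.trans hκ)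
  refine ⟨solutionHull S {b}, subset_solutionHull S {b} rfl, mk_solutionHull_le S hκ hR hS hb,
    ?_, ?_, ?_⟩
  · exact (solutionClosed_solutionHull S (by simp [S]) _).isPureSubmodule
  · exact (solutionClosed_solutionHull S (by simp [S]) _).isPureSubmodule_inf hC
  · exact (solutionClosed_solutionHull S (by simp [S]) _).isPureSubmodule_sup hC

theorem LinearPMap.exists_extension_of_pure {R B F : Type*} [Ring R] [AddCommGroup B] [Module R B]
    [AddCommGroup F] [Module R F]
    (hstep : ∀ q : B →ₗ.[R] F, IsPureSubmodule q.domain → ∀ b : B,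
      ∃ q', q ≤ q' ∧ IsPureSubmodule q'.domain ∧ b ∈ q'.domain)
    (q₀ : B →ₗ.[R] F) (h₀ : IsPureSubmodule q₀.domain) :
    ∃ h : B →ₗ[R] F, ∀ x : q₀.domain, h x = q₀ x := by
  obtain ⟨q, hq₀, hq, hmax⟩ := zorn_le_nonempty₀ {q : B →ₗ.[R] F | IsPureSubmodule q.domain}
    (fun c hc hchain p hp => ⟨LinearPMap.sSup c hchain.directedOn,
      isPureSubmodule_sSup ⟨_, Set.mem_image_of_mem _ hp⟩
        (hchain.directedOn.mono_comp LinearPMap.domain_mono.monotone)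
        (Set.forall_mem_image.2 hc),
      fun _ => LinearPMap.le_sSup _⟩) q₀ h₀
  have hdom : ∀ b, b ∈ q.domain := fun b => by
    obtain ⟨q', hqq', hq', hb⟩ := hstep q hq b
    exact (hmax hq' hqq').1 hb
  exact ⟨q.toFun ∘ₗ LinearMap.codRestrict _ LinearMap.id hdom, fun x => (hq₀.2 rfl).symm⟩

def BoundedFlatCotorsion (R : Type u) [CommRing R] (F : Type u) [AddCommGroup F] [Module R F]
    (κ : Cardinal.{u}) : Prop :=
  ∀ (A B : Type u) [AddCommGroup A] [Module R A] [AddCommGroup B] [Module R B],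
    Module.Flat R A → Module.Flat R B → #A ≤ κ → #B ≤ κ →
    ∀ f : A →ₗ[R] B, IsPureEmbedding f →
    ∀ g : A →ₗ[R] F, ∃ h : B →ₗ[R] F, h.comp f = g

section Extension

variable {R : Type u} [CommRing R] {F : Type u} [AddCommGroup F] [Module R F]

theorem BoundedFlatCotorsion.exists_pure_extension {κ : Cardinal.{u}}
    (hF : BoundedFlatCotorsion R F κ) (hκ : ℵ₀ ≤ κ) (hR : #R ≤ κ)
    {B : Type u} [AddCommGroup B] [Module R B] [Module.Flat R B]
    (q : B →ₗ.[R] F) (hq : IsPureSubmodule q.domain) (b : B) :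
    ∃ q', q ≤ q' ∧ IsPureSubmodule q'.domain ∧ b ∈ q'.domain := by
  obtain ⟨D, hbD, hDκ, hD, hCD, hCsupD⟩ := exists_pure_cover hκ hR hq b
  have : Module.Flat R D := hD.flat
  have : Module.Flat R ↥(q.domain ⊓ D) := hCD.flat
  obtain ⟨h, hh⟩ := hF _ D ‹_› ‹_›
    ((mk_le_of_injective (inclusion_injective inf_le_right)).trans hDκ) hDκ
    _ (hCD.isPureEmbedding_inclusion inf_le_right) (q.toFun ∘ₗ inclusion inf_le_left)
  refine ⟨q.sup ⟨D, h⟩ ?_, q.left_le_sup _ _, hCsupD, mem_sup_right hbD⟩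
  rintro ⟨x, hx⟩ ⟨y, hy⟩ (rfl : x = y)
  exact (LinearMap.congr_fun hh ⟨x, hx, hy⟩).symm

theorem BoundedFlatCotorsion.flatCotorsion {κ : Cardinal.{u}} (hF : BoundedFlatCotorsion R F κ)
    (hκ : ℵ₀ ≤ κ) (hR : #R ≤ κ) : FlatCotorsion R F := by
  intro A B _ _ _ _ _ _ f hf g
  let e := LinearEquiv.ofInjective f hf.1
  obtain ⟨h, hh⟩ := LinearPMap.exists_extension_of_pure (hF.exists_pure_extension hκ hR)
    ⟨LinearMap.range f, g ∘ₗ e.symm.toLinearMap⟩ hf.2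
  refine ⟨h, LinearMap.ext fun a => ?_⟩
  simpa [e] using hh (e a)

end Extension

theorem stmt12_general (R : Type u) [CommRing R] (F : Type u) [AddCommGroup F] [Module R F] :
    FlatCotorsion R F ↔
      ∀ (A B : Type u) [AddCommGroup A] [Module R A] [AddCommGroup B] [Module R B],
        Module.Flat R A → Module.Flat R B →
        Cardinal.mk A ≤ max (Cardinal.mk R) Cardinal.aleph0 →
        Cardinal.mk B ≤ max (Cardinal.mk R) Cardinal.aleph0 →
        ∀ f : A →ₗ[R] B, IsPureEmbedding f →
        ∀ g : A →ₗ[R] F, ∃ h : B →ₗ[R] F, h.comp f = g :=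
  ⟨fun hF A B _ _ _ _ hA hB _ _ => hF A B hA hB,
    fun hF => BoundedFlatCotorsion.flatCotorsion hF (le_max_right _ _) (le_max_left _ _)⟩

theorem stmt12 (R : Type u) [CommRing R] (F : Type u) [AddCommGroup F] [Module R F]
    (hF : Module.Flat R F) :
    FlatCotorsion R F ↔
      ∀ (A B : Type u) [AddCommGroup A] [Module R A] [AddCommGroup B] [Module R B],
        Module.Flat R A → Module.Flat R B →
        Cardinal.mk A ≤ max (Cardinal.mk R) Cardinal.aleph0 →
        Cardinal.mk B ≤ max (Cardinal.mk R) Cardinal.aleph0 →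
        ∀ f : A →ₗ[R] B, IsPureEmbedding f →
        ∀ g : A →ₗ[R] F, ∃ h : B →ₗ[R] F, h.comp f = g :=
  stmt12_general R F
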